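/- arXiv:1404.6575 — 2 statements merged into one kernel-verified Lean document; each statement's English description precedes it below -/
import Mathlib

section
/- Let R be an algebra over a field k with trivial center, and let φ be an outer automorphism of R such that φ² is inner, say φ²(x) = g x g^{-1} for all x ∈ R with g ∈ R invertible. Then φ(g) = g or φ(g) = −g. -/
/-- Let `R` be an algebra over a field `k` with trivial center, and `φ` an outer
automorphism of `R` such that `φ²` is inner, implemented by an invertible element `g`
(`φ²(x) = g x g⁻¹` for all `x`).  Then `φ(g) = g` or `φ(g) = -g`. -/
theorem phi_g_eq_pm_g {k : Type*} [Field k] {R : Type*} [Ring R] [Algebra k R]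
    (hcenter : Subalgebra.center k R = ⊥)
    (φ : R ≃ₐ[k] R)
    (houter : ¬ ∃ u : Rˣ, ∀ x : R, φ x = ↑u * x * ↑u⁻¹)
    (g : Rˣ) (hinner : ∀ x : R, φ (φ x) = ↑g * x * ↑g⁻¹) :
    φ ↑g = ↑g ∨ φ ↑g = -↑g := by
  -- φ(g) as a unit
  set u : Rˣ := ⟨φ ↑g, φ ↑g⁻¹,
    by rw [← map_mul, Units.mul_inv, map_one],
    by rw [← map_mul, Units.inv_mul, map_one]⟩ with hu
  have hucoe : (↑u : R) = φ ↑g := rfl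
  have huinv : (↑u⁻¹ : R) = φ ↑g⁻¹ := rfl
  -- φ(g) also implements φ²
  have key : ∀ y : R, (↑u : R) * y * ↑u⁻¹ = ↑g * y * ↑g⁻¹ := by
    intro y
    obtain ⟨x, rfl⟩ : ∃ x, φ x = y := ⟨φ.symm y, φ.apply_symm_apply y⟩
    calc (↑u : R) * φ x * ↑u⁻¹ = φ (↑g * x * ↑g⁻¹) := by
          rw [hucoe, huinv]; simp [map_mul, mul_assoc]
      _ = φ (φ (φ x)) := by rw [← hinner x]
      _ = ↑g * φ x * ↑g⁻¹ := hinner (φ x)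
  -- hence g⁻¹ * φ(g) is central
  have hz : (↑g⁻¹ * ↑u : R) ∈ Subalgebra.center k R := by
    rw [Subalgebra.mem_center_iff]
    intro y
    have h := key y
    have : (↑u : R) * y = ↑g * y * ↑g⁻¹ * ↑u := by
      calc (↑u : R) * y = ↑u * y * ↑u⁻¹ * ↑u := by
            rw [mul_assoc, Units.inv_mul, mul_one]
        _ = ↑g * y * ↑g⁻¹ * ↑u := by rw [h]
    calc y * (↑g⁻¹ * ↑u) = ↑g⁻¹ * (↑g * y * ↑g⁻¹ * ↑u) := by
          simp only [← mul_assoc]; rw [Units.inv_mul, one_mul]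
      _ = ↑g⁻¹ * (↑u * y) := by rw [this]
      _ = (↑g⁻¹ * ↑u) * y := by rw [mul_assoc]
  rw [hcenter, Algebra.mem_bot] at hz
  obtain ⟨c, hc⟩ := hz
  have hphig : φ ↑g = c • ↑g := by
    have : (↑u : R) = ↑g * ((algebraMap k R) c) := by
      rw [hc]; rw [← mul_assoc, Units.mul_inv, one_mul]
    rw [← hucoe, this, Algebra.smul_def, Algebra.commutes]
  -- apply φ² to g
  have h2 : φ (φ ↑g) = ↑g := by
    rw [hinner ↑g, mul_assoc, Units.mul_inv, mul_one]
  rw [hphig, map_smul, hphig, smul_smul] at h2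
  rcases subsingleton_or_nontrivial R with hR | hR
  · left; exact Subsingleton.elim _ _
  have hcc : c * c = 1 := by
    have : ((c * c - 1) • (↑g : R)) = 0 := by
      rw [sub_smul, one_smul, h2, sub_self]
    have h1 : ((c * c - 1) • (1 : R)) = 0 := by
      have := congrArg (· * (↑g⁻¹ : R)) this
      simpa [smul_mul_assoc, Units.mul_inv] using this
    by_contra hne
    have hsub : c * c - 1 ≠ 0 := sub_ne_zero.mpr hne
    have := congrArg (fun z => (c * c - 1)⁻¹ • z) h1
    simp only [smul_zero, smul_smul, inv_mul_cancel₀ hsub, one_smul] at this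
    exact one_ne_zero this
  rcases mul_self_eq_one_iff.mp hcc with h | h
  · left; rw [hphig, h, one_smul]
  · right; rw [hphig, h, neg_smul, one_smul]
end

section
/- Let e, h, f be an sl₂-triple in a complex semisimple Lie algebra g, let l ⊆ g(−1) be a Lagrangian subspace for the form (e,[·,·]), and set m = l ⊕ ⊕_{i ≤ −2} g(i). Then m is a Lie subalgebra of g consisting of ad-nilpotent elements, and the map ξ(x) = (x,e) (Killing form pairing) is a Lie algebra homomorphism m → ℂ, i.e., ξ([x,y]) = 0 for all x, y ∈ m. -/
/-!
Write `g(≤ n)` for the sum of the `ad h`-eigenspaces `g(i)` with `i ≤ n`. Then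
`[g(≤ m), g(≤ n)] ⊆ g(≤ m + n)`, and invariance of the Killing form makes `g(i)` orthogonal to
`e ∈ g(2)` unless `i = -2`. As `m ⊆ g(≤ -1)`, brackets of elements of `m` land in `g(≤ -2) ⊆ m`.
For `x ∈ g(≤ -1)`, `ad x` moves each generalized `ad h`-eigenspace to ones whose eigenvalue is
lower by a positive integer; there are finitely many of them, so `ad x` is nilpotent. Finally,
in `[p + q, c + d]` with `p, c ∈ l` and `q, d ∈ g(≤ -2)` every term except `[p, c]` lies in
`g(≤ -3)`, which is orthogonal to `e`, and `κ([p, c], e) = 0` is the isotropy of `l`.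
-/

namespace Module.End

section Filtration

variable {R M : Type*} [CommRing R] [AddCommGroup M] [Module R M]

def eigenspacesLE (f : End R M) (n : ℤ) : Submodule R M :=
  ⨆ i : ℤ, ⨆ _ : i ≤ n, f.eigenspace (i : R)

variable {f : End R M}

theorem eigenspace_le_eigenspacesLE {i n : ℤ} (h : i ≤ n) :
    f.eigenspace (i : R) ≤ f.eigenspacesLE n :=
  le_iSup₂_of_le (f := fun i (_ : i ≤ n) => f.eigenspace (i : R)) i h le_rfl

theorem eigenspacesLE_le_iff {n : ℤ} {p : Submodule R M} :
    f.eigenspacesLE n ≤ p ↔ ∀ i ≤ n, f.eigenspace (i : R) ≤ p :=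
  iSup₂_le_iff

theorem eigenspacesLE_mono : Monotone f.eigenspacesLE := fun _ _ hmn =>
  eigenspacesLE_le_iff.mpr fun _ hi => eigenspace_le_eigenspacesLE (hi.trans hmn)

end Filtration

section Lowering

variable {K V : Type*} [Field K] [AddCommGroup V] [Module K V]
  {E : K → Submodule K V} {f : End K V}

theorem iSup_add_intCast_le_comap
    (hf : ∀ μ, ∀ v ∈ E μ, f v ∈ ⨆ k : ℤ, ⨆ _ : k ≤ -1, E (μ + k)) (μ : K) (n : ℤ) :
    ⨆ k : ℤ, ⨆ _ : k ≤ n, E (μ + k) ≤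
      (⨆ k : ℤ, ⨆ _ : k ≤ n - 1, E (μ + k)).comap f := by
  refine iSup₂_le fun k hk v hv => ?_
  have hle : ⨆ j : ℤ, ⨆ _ : j ≤ -1, E (μ + k + j) ≤ ⨆ k : ℤ, ⨆ _ : k ≤ n - 1, E (μ + k) :=
    iSup₂_le fun j hj => le_iSup₂_of_le (f := fun k (_ : k ≤ n - 1) => E (μ + k)) (k + j)
      (by omega) (by rw [Int.cast_add, add_assoc])
  exact hle (hf _ v hv)

theorem pow_apply_mem_iSup_add_intCast
    (hf : ∀ μ, ∀ v ∈ E μ, f v ∈ ⨆ k : ℤ, ⨆ _ : k ≤ -1, E (μ + k))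
    {μ : K} {v : V} (hv : v ∈ E μ) (n : ℕ) :
    (f ^ n) v ∈ ⨆ k : ℤ, ⨆ _ : k ≤ -(n : ℤ), E (μ + k) := by
  induction n with
  | zero =>
    refine Submodule.mem_iSup_of_mem 0 (Submodule.mem_iSup_of_mem le_rfl ?_)
    simpa using hv
  | succ n ih =>
    rw [pow_succ', mul_apply]
    have := iSup_add_intCast_le_comap hf μ _ ih
    simpa [sub_eq_add_neg, add_comm] using this

theorem exists_pow_apply_eq_zero_of_lowers [CharZero K] (hfin : {μ | E μ ≠ ⊥}.Finite)
    (hf : ∀ μ, ∀ v ∈ E μ, f v ∈ ⨆ k : ℤ, ⨆ _ : k ≤ -1, E (μ + k))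
    {μ : K} {v : V} (hv : v ∈ E μ) : ∃ n : ℕ, (f ^ n) v = 0 := by
  have hshift : {k : ℤ | E (μ + k) ≠ ⊥}.Finite :=
    hfin.preimage fun a _ b _ hab => Int.cast_injective (add_left_cancel hab)
  obtain ⟨b, hb⟩ := hshift.bddBelow
  refine ⟨(-b).toNat + 1, ?_⟩
  have hbot : ⨆ k : ℤ, ⨆ _ : k ≤ -(((-b).toNat + 1 : ℕ) : ℤ), E (μ + k) = ⊥ := by
    refine iSup₂_eq_bot.mpr fun k hk => ?_
    by_contra hne
    have := hb hne
    omega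
  have h := pow_apply_mem_iSup_add_intCast hf hv ((-b).toNat + 1)
  rwa [hbot, Submodule.mem_bot] at h

theorem isNilpotent_of_lowers [CharZero K] [FiniteDimensional K V] (htop : ⨆ μ, E μ = ⊤)
    (hfin : {μ | E μ ≠ ⊥}.Finite)
    (hf : ∀ μ, ∀ v ∈ E μ, f v ∈ ⨆ k : ℤ, ⨆ _ : k ≤ -1, E (μ + k)) : IsNilpotent f := by
  refine isNilpotent_iff_of_finite.mpr fun v => ?_
  have hv : v ∈ ⨆ μ, E μ := htop ▸ Submodule.mem_top
  induction hv using Submodule.iSup_induction' with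
  | mem μ v hv => exact exists_pow_apply_eq_zero_of_lowers hfin hf hv
  | zero => exact ⟨0, rfl⟩
  | add v w _ _ hv hw =>
    obtain ⟨n, hn⟩ := hv
    obtain ⟨m, hm⟩ := hw
    refine ⟨max n m, ?_⟩
    rw [map_add, pow_map_zero_of_le le_sup_left hn, pow_map_zero_of_le le_sup_right hm, add_zero]

end Lowering

end Module.End

namespace LieAlgebra

open Module.End

section CommRing

variable {R L : Type*} [CommRing R] [LieRing L] [LieAlgebra R L] {h x y : L}

theorem lie_mem_eigenspace_ad_add {a b : R} (hx : x ∈ (ad R L h).eigenspace a)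
    (hy : y ∈ (ad R L h).eigenspace b) : ⁅x, y⁆ ∈ (ad R L h).eigenspace (a + b) := by
  rw [mem_eigenspace_iff, ad_apply] at hx hy ⊢
  rw [leibniz_lie, hx, hy, smul_lie, lie_smul, add_smul]

theorem lie_mem_eigenspacesLE_ad {m n k : ℤ} (hk : m + n ≤ k)
    (hx : x ∈ (ad R L h).eigenspacesLE m) (hy : y ∈ (ad R L h).eigenspacesLE n) :
    ⁅x, y⁆ ∈ (ad R L h).eigenspacesLE k := by
  let bracket : L →ₗ[R] L →ₗ[R] L := ad R L
  suffices Submodule.map₂ bracket ((ad R L h).eigenspacesLE m) ((ad R L h).eigenspacesLE n) ≤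
      (ad R L h).eigenspacesLE k from this (Submodule.apply_mem_map₂ bracket hx hy)
  simp only [eigenspacesLE, Submodule.map₂_iSup_left, Submodule.map₂_iSup_right, iSup_le_iff,
    Submodule.map₂_le]
  intro i hi j hj x hx y hy
  have hxy := lie_mem_eigenspace_ad_add hx hy
  rw [← Int.cast_add] at hxy
  exact eigenspace_le_eigenspacesLE (by omega) hxy

theorem killingForm_eq_zero_of_mem_eigenspace_ad [NoZeroDivisors R] {a b : R}
    (hx : x ∈ (ad R L h).eigenspace a) (hy : y ∈ (ad R L h).eigenspace b) (hab : a + b ≠ 0) :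
    killingForm R L x y = 0 := by
  rw [mem_eigenspace_iff, ad_apply] at hx hy
  have hinv : killingForm R L ⁅x, h⁆ y = killingForm R L x ⁅h, y⁆ :=
    LieModule.traceForm_apply_lie_apply R L L x h y
  rw [← lie_skew, hx, hy, map_neg, LinearMap.neg_apply, map_smul, LinearMap.smul_apply,
    map_smul, smul_eq_mul, smul_eq_mul, neg_eq_iff_add_eq_zero, ← add_mul] at hinv
  exact (mul_eq_zero.mp hinv).resolve_left hab

theorem killingForm_eq_zero_of_mem_eigenspacesLE_ad [NoZeroDivisors R] [CharZero R] {n b : ℤ}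
    (hnb : n + b < 0) (hx : x ∈ (ad R L h).eigenspacesLE n)
    (hy : y ∈ (ad R L h).eigenspace (b : R)) : killingForm R L x y = 0 := by
  suffices (ad R L h).eigenspacesLE n ≤ LinearMap.ker ((killingForm R L).flip y) from this hx
  refine eigenspacesLE_le_iff.mpr fun i hi x hx => ?_
  refine killingForm_eq_zero_of_mem_eigenspace_ad hx hy ?_
  exact_mod_cast (show i + b ≠ 0 by omega)

end CommRing

section Field

variable {K L : Type*} [Field K] [LieRing L] [LieAlgebra K L] [FiniteDimensional K L] {h x : L}

theorem isNilpotent_ad_of_mem_eigenspacesLE_ad [IsAlgClosed K] [CharZero K]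
    (hx : x ∈ (ad K L h).eigenspacesLE (-1)) : IsNilpotent (ad K L x) := by
  refine isNilpotent_of_lowers (E := (ad K L h).maxGenEigenspace)
    (iSup_maxGenEigenspace_eq_top _)
    (Submodule.finite_ne_bot_of_iSupIndep (independent_maxGenEigenspace _)) fun μ v hv => ?_
  suffices (ad K L h).eigenspacesLE (-1) ≤ (⨆ k : ℤ, ⨆ _ : k ≤ -1,
      (ad K L h).maxGenEigenspace (μ + k)).comap ((ad K L).flip v) from this hx
  refine eigenspacesLE_le_iff.mpr fun i hi x hx => ?_
  have hxv := LieModule.lie_mem_maxGenEigenspace_toEnd (eigenspace_le_maxGenEigenspace hx) hv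
  exact Submodule.mem_iSup_of_mem i (Submodule.mem_iSup_of_mem hi (by rwa [add_comm]))

end Field

end LieAlgebra

open LieAlgebra Module.End

theorem whittaker_subalgebra_general
    {L : Type*} [LieRing L] [LieAlgebra ℂ L]
    [FiniteDimensional ℂ L]
    (e h : L)
    (hhe : ⁅h, e⁆ = (2 : ℂ) • e)
    (l : Submodule ℂ L)
    (hl : l ≤ Module.End.eigenspace (LieAlgebra.ad ℂ L h) (-1))
    -- `l` is isotropic for the form `(x, y) ↦ κ(e, [x, y])` …
    (hiso : ∀ x ∈ l, ∀ y ∈ l, killingForm ℂ L e ⁅x, y⁆ = 0)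
    (m : Submodule ℂ L)
    (hm : m = l ⊔ ⨆ i : ℤ, ⨆ _ : i ≤ -2,
      Module.End.eigenspace (LieAlgebra.ad ℂ L h) (i : ℂ)) :
    -- `m` is a Lie subalgebra …
    (∀ x ∈ m, ∀ y ∈ m, ⁅x, y⁆ ∈ m) ∧
    -- … consisting of ad-nilpotent elements …
    (∀ x ∈ m, IsNilpotent (LieAlgebra.ad ℂ L x)) ∧
    -- … and `ξ(x) = κ(x, e)` is a Lie algebra character of `m`
    (∀ x ∈ m, ∀ y ∈ m, killingForm ℂ L ⁅x, y⁆ e = 0) := by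
  change m = l ⊔ (ad ℂ L h).eigenspacesLE (-2) at hm
  have he : e ∈ (ad ℂ L h).eigenspace ((2 : ℤ) : ℂ) := by simpa [mem_eigenspace_iff] using hhe
  have hl' : l ≤ (ad ℂ L h).eigenspacesLE (-1) := by
    have := eigenspace_le_eigenspacesLE (f := ad ℂ L h) (le_refl (-1))
    rw [Int.cast_neg, Int.cast_one] at this
    exact hl.trans this
  have hm' : m ≤ (ad ℂ L h).eigenspacesLE (-1) := by
    rw [hm]; exact sup_le hl' (eigenspacesLE_mono (by norm_num))
  refine ⟨fun x hx y hy => ?_, fun x hx => isNilpotent_ad_of_mem_eigenspacesLE_ad (hm' hx), ?_⟩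
  · rw [hm]
    exact Submodule.mem_sup_right (lie_mem_eigenspacesLE_ad (by norm_num) (hm' hx) (hm' hy))
  intro x hx y hy
  obtain ⟨p, hp, q, hq, rfl⟩ := Submodule.mem_sup.mp (hm ▸ hx)
  obtain ⟨c, hc, d, hd, rfl⟩ := Submodule.mem_sup.mp (hm ▸ hy)
  have hpc : killingForm ℂ L ⁅p, c⁆ e = 0 := by
    rw [LieModule.traceForm_comm]; exact hiso p hp c hc
  have hqc : killingForm ℂ L ⁅q, c⁆ e = 0 := killingForm_eq_zero_of_mem_eigenspacesLE_ad
    (n := -3) (by norm_num) (lie_mem_eigenspacesLE_ad (by norm_num) hq (hl' hc)) he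
  have hxd : killingForm ℂ L ⁅p + q, d⁆ e = 0 := killingForm_eq_zero_of_mem_eigenspacesLE_ad
    (n := -3) (by norm_num) (lie_mem_eigenspacesLE_ad (by norm_num) (hm' hx) hd) he
  rw [lie_add, add_lie p q c, map_add, map_add, LinearMap.add_apply, LinearMap.add_apply, hpc,
    hqc, hxd, add_zero, add_zero]

/-- Let `(e, h, f)` be an `sl₂`-triple in a complex semisimple Lie algebra `g`, with
`g(i)` the `ad(h)`-eigenspace of eigenvalue `i`.  Let `l ⊆ g(−1)` be a Lagrangian
(maximal isotropic) subspace for the symplectic form `(x, y) ↦ κ(e, [x, y])` and set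
`m = l ⊕ ⊕_{i ≤ −2} g(i)`.  Then `m` is a Lie subalgebra of `g` consisting of
ad-nilpotent elements, and `ξ(x) = κ(x, e)` is a Lie algebra homomorphism `m → ℂ`,
i.e. `ξ([x, y]) = 0` for all `x, y ∈ m`. -/
theorem whittaker_subalgebra
    {L : Type*} [LieRing L] [LieAlgebra ℂ L]
    [FiniteDimensional ℂ L] [LieAlgebra.IsSemisimple ℂ L]
    (e h f : L)
    (hhe : ⁅h, e⁆ = (2 : ℂ) • e) (hhf : ⁅h, f⁆ = (-2 : ℂ) • f) (hef : ⁅e, f⁆ = h)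
    (l : Submodule ℂ L)
    (hl : l ≤ Module.End.eigenspace (LieAlgebra.ad ℂ L h) (-1))
    -- `l` is isotropic for the form `(x, y) ↦ κ(e, [x, y])` …
    (hiso : ∀ x ∈ l, ∀ y ∈ l, killingForm ℂ L e ⁅x, y⁆ = 0)
    -- … and maximal isotropic (Lagrangian)
    (hmax : ∀ x ∈ Module.End.eigenspace (LieAlgebra.ad ℂ L h) (-1),
      (∀ y ∈ l, killingForm ℂ L e ⁅x, y⁆ = 0) → x ∈ l)
    (m : Submodule ℂ L)
    (hm : m = l ⊔ ⨆ i : ℤ, ⨆ _ : i ≤ -2,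
      Module.End.eigenspace (LieAlgebra.ad ℂ L h) (i : ℂ)) :
    -- `m` is a Lie subalgebra …
    (∀ x ∈ m, ∀ y ∈ m, ⁅x, y⁆ ∈ m) ∧
    -- … consisting of ad-nilpotent elements …
    (∀ x ∈ m, IsNilpotent (LieAlgebra.ad ℂ L x)) ∧
    -- … and `ξ(x) = κ(x, e)` is a Lie algebra character of `m`
    (∀ x ∈ m, ∀ y ∈ m, killingForm ℂ L ⁅x, y⁆ e = 0) :=
  whittaker_subalgebra_general e h hhe l hl hiso m hm
end
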